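/- A vector linear program (minimize Px s.t. Ax ≥ b with ordering cone C = {y : Z^T y ≥ 0}, ker Z^T = {0}) has a solution if and only if it is feasible (S = {x : Ax ≥ b} ≠ ∅) and L ∩ C = {0}, where L is the lineality space of the upper image 𝒫 = P[S] + C. -/

import Mathlib

/-!
If `x₀` is a minimizer and `0 ≠ d ∈ L ∩ C`, then `P x₀ - d ∈ 𝒫`, i.e. `P x₀ = P z + (c + d)` with
`c ∈ C`; pointedness of `C` makes `c + d ≠ 0`, contradicting minimality of `x₀`.

Conversely, by Minkowski–Weyl the feasible set is `conv V + cone R` with `cone R` its recession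
cone. When `L ∩ C = {0}`, the scalarization `y ↦ ∑ⱼ (Zᵀ y)ⱼ` is bounded below along every
recession direction that `P` maps into `-C`, so a linear program produces, for each `v ∈ V`
(resp. `ρ ∈ R`), a minimizer whose image lies in `P v - C` (resp. `P ρ - C`). These finitely many
minimizers are a solution. Minkowski–Weyl itself follows, for cones, by intersecting a finitely
generated cone with one halfspace at a time (double description), and for polyhedra by
homogenization.
-/

open Pointwise Set

/-- `cone B = {λ x : λ ≥ 0, x ∈ conv B}`, with `cone ∅ = {0}`. -/
def coneOf {q : ℕ} (B : Set (Fin q → ℝ)) : Set (Fin q → ℝ) :=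
  insert 0 {x | ∃ l : ℝ, 0 ≤ l ∧ ∃ b ∈ convexHull ℝ B, x = l • b}

/-- recession cone `0⁺P = {d : P + d ⊆ P}` -/
def recCone {q : ℕ} (P : Set (Fin q → ℝ)) : Set (Fin q → ℝ) :=
  {d | ∀ y ∈ P, y + d ∈ P}

/-- `(Spoi, Sdir)` is a solution of the VLP `min Px s.t. Ax ≥ b` w.r.t. the
ordering cone `C`: a finite infimizer consisting only of minimizers. -/
def IsVLPSolution {m n q : ℕ} (A : Matrix (Fin m) (Fin n) ℝ) (b : Fin m → ℝ)
    (P : Matrix (Fin q) (Fin n) ℝ) (C : Set (Fin q → ℝ))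
    (Spoi Sdir : Set (Fin n → ℝ)) : Prop :=
  Spoi.Finite ∧ Sdir.Finite ∧ Spoi.Nonempty ∧
  -- feasibility
  (∀ x ∈ Spoi, ∀ i, b i ≤ A.mulVec x i) ∧
  (∀ x ∈ Sdir, x ≠ 0 ∧ ∀ i, (0:ℝ) ≤ A.mulVec x i) ∧
  -- minimizers
  (∀ x ∈ Spoi,
    P.mulVec x ∉ (P.mulVec '' {z | ∀ i, b i ≤ A.mulVec z i}) + (C \ {0})) ∧
  (∀ x ∈ Sdir,
    P.mulVec x ∉ (P.mulVec '' {z | ∀ i, (0:ℝ) ≤ A.mulVec z i}) + (C \ {0})) ∧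
  -- finite infimizer
  convexHull ℝ (P.mulVec '' Spoi) + coneOf (P.mulVec '' Sdir) + C =
    (P.mulVec '' {z | ∀ i, b i ≤ A.mulVec z i}) + C

open PointedCone

namespace PointedCone

variable {E F G : Type*} [AddCommGroup E] [Module ℝ E] [AddCommGroup F] [Module ℝ F]
  [AddCommGroup G] [Module ℝ G]

theorem mem_hull_iff_eq_zero_or_smul_mem_convexHull {s : Set E} {x : E} :
    x ∈ hull ℝ s ↔ x = 0 ∨ ∃ l : ℝ, 0 ≤ l ∧ ∃ b ∈ convexHull ℝ s, x = l • b := by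
  constructor
  · intro hx
    suffices x = 0 ∨ x ∈ ConvexCone.hull ℝ (convexHull ℝ s) by
      rcases this with h | h
      · exact .inl h
      obtain ⟨l, hl, b, hb, rfl⟩ := (ConvexCone.mem_hull_of_convex (convex_convexHull ℝ s)).1 h
      exact .inr ⟨l, hl.le, b, hb, rfl⟩
    induction hx using Submodule.span_induction with
    | mem x hx => exact .inr (ConvexCone.subset_hull (subset_convexHull ℝ s hx))
    | zero => exact .inl rfl
    | add x y _ _ hx hy =>
      rcases hx with rfl | hx
      · simpa using hy
      rcases hy with rfl | hy
      · simpa using Or.inr hx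
      exact .inr (ConvexCone.add_mem _ hx hy)
    | smul c x _ hx =>
      rcases hx with rfl | hx
      · simp
      rcases c.2.eq_or_lt with hc | hc
      · left; rw [← Nonneg.coe_smul, ← hc, zero_smul]
      · exact .inr (by rw [← Nonneg.coe_smul]; exact ConvexCone.smul_mem _ hc hx)
  · rintro (rfl | ⟨l, hl, b, hb, rfl⟩)
    · exact zero_mem _
    · exact smul_mem _ hl (convexHull_min subset_hull (hull ℝ s).convex hb)

theorem eq_zero_of_mem_hull_of_apply_nonpos (φ : E →ₗ[ℝ] ℝ) {s : Set E} {x : E}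
    (hs : ∀ g ∈ s, 0 < φ g) (hx : x ∈ hull ℝ s) (hφx : φ x ≤ 0) : x = 0 := by
  obtain h | ⟨l, hl, b, hb, rfl⟩ := mem_hull_iff_eq_zero_or_smul_mem_convexHull.1 hx
  · exact h
  have hb : 0 < φ b := convexHull_min hs (convex_halfSpace_gt φ.isLinear 0) hb
  rw [map_smul, smul_eq_mul] at hφx
  rw [le_antisymm (nonpos_of_mul_nonpos_left hφx hb) hl, zero_smul]

theorem mem_convexHull_of_mem_hull (φ : E →ₗ[ℝ] ℝ) {s : Set E} {x : E}
    (hs : ∀ g ∈ s, φ g = 1) (hx : x ∈ hull ℝ s) (hφx : φ x = 1) : x ∈ convexHull ℝ s := by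
  obtain rfl | ⟨l, -, b, hb, rfl⟩ := mem_hull_iff_eq_zero_or_smul_mem_convexHull.1 hx
  · simp at hφx
  have hb' : φ b = 1 := convexHull_min hs (convex_hyperplane φ.isLinear 1) hb
  rw [map_smul, hb', smul_eq_mul, mul_one] at hφx
  rwa [hφx, one_smul]

theorem apply_mem_hull_image2 (B : E →ₗ[ℝ] F →ₗ[ℝ] G) {s : Set E} {t : Set F} {x : E} {y : F}
    (hx : x ∈ hull ℝ s) (hy : y ∈ hull ℝ t) : B x y ∈ hull ℝ (image2 (fun x y => B x y) s t) := by
  have := Submodule.apply_mem_map₂ (B.restrictScalars₁₂ {c : ℝ // 0 ≤ c} {c : ℝ // 0 ≤ c}) hx hy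
  rwa [Submodule.map₂_span_span] at this

def halfspaceGenerators (a : E →ₗ[ℝ] ℝ) (s : Set E) : Set E :=
  {g ∈ s | 0 ≤ a g} ∪ image2 (fun g h => a g • h - a h • g) {g ∈ s | 0 ≤ a g} {h ∈ s | a h < 0}

theorem hull_inf_dual_singleton (a : E →ₗ[ℝ] ℝ) (s : Set E) :
    hull ℝ s ⊓ dual .id {a} = hull ℝ (halfspaceGenerators a s) := by
  set sp := {g ∈ s | 0 ≤ a g}
  set sn := {g ∈ s | a g < 0}
  apply le_antisymm
  · rintro x ⟨hx, hax⟩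
    replace hax : 0 ≤ a x := by simpa using hax
    have hs : s = sp ∪ sn := by ext g; simp [sp, sn, ← and_or_left, le_or_gt]
    rw [hs, hull, Submodule.span_union] at hx
    obtain ⟨y, hy, w, hw, rfl⟩ := Submodule.mem_sup.1 hx
    have hsp : hull ℝ sp ≤ hull ℝ (halfspaceGenerators a s) :=
      Submodule.span_mono subset_union_left
    have hay : 0 ≤ a y := by
      simpa using (Submodule.span_le (p := dual .id {a})).2 (fun g hg => by simpa using hg.2) hy
    rcases hay.eq_or_lt with hay | hay
    · obtain rfl : w = 0 := eq_zero_of_mem_hull_of_apply_nonpos (-a)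
        (fun g hg => by simpa using hg.2) hw (by simp only [map_add] at hax; simp; linarith)
      simpa using hsp hy
    · let B : E →ₗ[ℝ] E →ₗ[ℝ] E := (LinearMap.lsmul ℝ E).compl₁₂ a LinearMap.id -
        ((LinearMap.lsmul ℝ E).compl₁₂ a LinearMap.id).flip
      have hB : a y • w - a w • y ∈ hull ℝ (halfspaceGenerators a s) := by
        have hBapp : ∀ x z, B x z = a x • z - a z • x := fun x z => by simp [B]
        have := apply_mem_hull_image2 B hy hw
        simp only [hBapp] at this
        exact Submodule.span_mono subset_union_right this
      have hdecomp : y + w = (1 + a w / a y) • y + (a y)⁻¹ • (a y • w - a w • y) := by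
        rw [smul_sub, smul_smul, smul_smul, inv_mul_cancel₀ hay.ne']; module
      rw [hdecomp]
      refine add_mem (smul_mem _ ?_ (hsp hy)) (smul_mem _ (inv_nonneg.2 hay.le) hB)
      rw [map_add] at hax
      rw [show 1 + a w / a y = (a y + a w) / a y by field_simp]
      exact div_nonneg hax hay.le
  · refine le_inf (Submodule.span_le.2 ?_) (Submodule.span_le.2 ?_)
    · rintro _ (hg | ⟨g, hg, h, hh, rfl⟩)
      · exact subset_hull hg.1
      · change a g • h - a h • g ∈ hull ℝ s
        rw [sub_eq_add_neg, ← neg_smul]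
        exact add_mem (smul_mem _ hg.2 (subset_hull hh.1))
          (smul_mem _ (neg_nonneg.2 hh.2.le) (subset_hull hg.1))
    · rintro _ (hg | ⟨g, hg, h, hh, rfl⟩)
      · simpa using hg.2
      · simp [mul_comm]

theorem fg_inf_dual_singleton {C : PointedCone ℝ E} (hC : C.FG) (a : E →ₗ[ℝ] ℝ) :
    (C ⊓ dual .id {a}).FG := by
  obtain ⟨s, hs, rfl⟩ := Submodule.fg_def.1 hC
  rw [hull_inf_dual_singleton]
  exact Submodule.fg_def.2 ⟨_, (hs.sep _).union ((hs.sep _).image2 _ (hs.sep _)), rfl⟩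

theorem fg_top [Module.Finite ℝ E] : (⊤ : PointedCone ℝ E).FG := by
  obtain ⟨n, s, hs⟩ := Module.Finite.exists_fin (R := ℝ) (M := E)
  refine Submodule.fg_def.2 ⟨range s ∪ -range s, (finite_range s).union (finite_range s).neg, ?_⟩
  have : Submodule.span ℝ (range s) ≤ (hull ℝ (range s ∪ -range s)).lineal := by
    refine Submodule.span_le.2 ?_
    rintro _ ⟨i, rfl⟩
    exact mem_lineal.2 ⟨subset_hull (.inl ⟨i, rfl⟩), subset_hull (.inr (by simp))⟩
  rw [hs, top_le_iff] at this
  exact eq_top_iff.2 fun x _ => lineal_le _ (by rw [this]; trivial)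

theorem DualFG.fg [Module.Finite ℝ E] {M : Type*} [AddCommGroup M] [Module ℝ M]
    {p : M →ₗ[ℝ] E →ₗ[ℝ] ℝ} {C : PointedCone ℝ E} (hC : C.DualFG p) : C.FG := by
  classical
  obtain ⟨s, rfl⟩ := hC.id
  clear hC
  induction s using Finset.induction_on with
  | empty => simpa using fg_top
  | insert a s _ ih =>
    rw [Finset.coe_insert, dual_insert, inf_comm]
    exact fg_inf_dual_singleton ih a

theorem exists_eq_add_of_mem_hull {G : Set (E × ℝ)} (hG : ∀ g ∈ G, 0 ≤ g.2) {p : E × ℝ}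
    (hp : p ∈ hull ℝ G) :
    ∃ y ∈ hull ℝ ((fun g => g.2⁻¹ • g) '' {g ∈ G | 0 < g.2}),
      ∃ r ∈ hull ℝ (Prod.fst '' {g ∈ G | g.2 = 0}), p = y + (r, 0) := by
  induction hp using Submodule.span_induction with
  | mem g hg =>
    rcases (hG g hg).lt_or_eq with hg2 | hg2
    · refine ⟨g, ?_, 0, zero_mem _, by simp⟩
      rw [← smul_inv_smul₀ hg2.ne' g]
      exact smul_mem _ hg2.le (subset_hull ⟨g, ⟨hg, hg2⟩, rfl⟩)
    · exact ⟨0, zero_mem _, g.1, subset_hull ⟨g, ⟨hg, hg2.symm⟩, rfl⟩, by ext <;> simp [hg2]⟩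
  | zero => exact ⟨0, zero_mem _, 0, zero_mem _, by ext <;> simp⟩
  | add p q _ _ hp hq =>
    obtain ⟨y, hy, r, hr, rfl⟩ := hp
    obtain ⟨y', hy', r', hr', rfl⟩ := hq
    refine ⟨y + y', add_mem hy hy', r + r', add_mem hr hr', ?_⟩
    ext <;> simp only [Prod.fst_add, Prod.snd_add, add_zero]
    abel
  | smul c p _ hp =>
    obtain ⟨y, hy, r, hr, rfl⟩ := hp
    exact ⟨c • y, Submodule.smul_mem _ c hy, c • r, Submodule.smul_mem _ c hr, by
      ext <;> simp [← Nonneg.coe_smul]⟩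

end PointedCone

section Polyhedron

variable {ι E : Type*} [AddCommGroup E] [Module ℝ E]

def polyhedron (f : ι → E →ₗ[ℝ] ℝ) (β : ι → ℝ) : Set E := {x | ∀ i, β i ≤ f i x}

theorem coe_dual_range (f : ι → E →ₗ[ℝ] ℝ) :
    (dual .id (range f) : Set E) = polyhedron f 0 := by
  ext; simp [polyhedron]

theorem convex_polyhedron (f : ι → E →ₗ[ℝ] ℝ) (β : ι → ℝ) : Convex ℝ (polyhedron f β) := by
  rw [polyhedron, ofPred_forall]
  exact convex_iInter fun i => convex_halfSpace_ge (f i).isLinear (β i)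

theorem add_mem_polyhedron {f : ι → E →ₗ[ℝ] ℝ} {β : ι → ℝ} {x d : E} (hx : x ∈ polyhedron f β)
    (hd : d ∈ polyhedron f 0) : x + d ∈ polyhedron f β := fun i => by
  simpa [map_add] using add_le_add (hx i) (hd i)

/-- Homogenization: `polyhedron f β` is the slice at height one of the polyhedral cone
`{(x, t) | 0 ≤ t, β t ≤ f x}`, and its recession cone is the slice at height zero. -/
theorem exists_polyhedron_eq_convexHull_add_hull [Finite ι] [Module.Finite ℝ E]
    (f : ι → E →ₗ[ℝ] ℝ) (β : ι → ℝ) :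
    ∃ V R : Set E, V.Finite ∧ R.Finite ∧
      polyhedron f β = convexHull ℝ V + hull ℝ R ∧ (hull ℝ R : Set E) = polyhedron f 0 := by
  set fβ : Set ((E × ℝ) →ₗ[ℝ] ℝ) := insert (LinearMap.snd ℝ E ℝ)
    (range fun i => f i ∘ₗ LinearMap.fst ℝ E ℝ - β i • LinearMap.snd ℝ E ℝ)
  set K : PointedCone ℝ (E × ℝ) := dual .id fβ
  have hK : ∀ p : E × ℝ, p ∈ K ↔ 0 ≤ p.2 ∧ ∀ i, β i * p.2 ≤ f i p.1 := fun p => by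
    simp [K, fβ, sub_nonneg]
  obtain ⟨G, hGfin, hG⟩ : ∃ G : Set (E × ℝ), G.Finite ∧ hull ℝ G = K := Submodule.fg_def.1
    (DualFG.fg (DualFG.dual_of_finite LinearMap.id ((finite_range _).insert _ : fβ.Finite)))
  have hGK : ∀ g ∈ G, g ∈ K := fun g hg => hG ▸ subset_hull hg
  set W := (fun g => g.2⁻¹ • g) '' {g ∈ G | 0 < g.2}
  set R := Prod.fst '' {g ∈ G | g.2 = 0}
  have hW : ∀ w ∈ W, LinearMap.snd ℝ E ℝ w = 1 := by
    rintro _ ⟨g, ⟨-, hg⟩, rfl⟩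
    simp [hg.ne']
  have hR : (hull ℝ R : Set E) ⊆ polyhedron f 0 := by
    rw [← coe_dual_range]
    refine Submodule.span_le.2 ?_
    rintro _ ⟨g, ⟨hg, hg0⟩, rfl⟩
    have := ((hK g).1 (hGK g hg)).2
    simpa [hg0] using this
  have hGnn : ∀ g ∈ G, 0 ≤ g.2 := fun g hg => ((hK g).1 (hGK g hg)).1
  have hlift : ∀ x t, 0 ≤ t → (∀ i, β i * t ≤ f i x) → (x, t) ∈ hull ℝ G :=
    fun x t ht hx => hG ▸ (hK (x, t)).2 ⟨ht, hx⟩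
  refine ⟨LinearMap.fst ℝ E ℝ '' W, R, ((hGfin.sep _).image _).image _, (hGfin.sep _).image _,
    Subset.antisymm (fun x hx => ?_) ?_, Subset.antisymm hR fun x hx => ?_⟩
  · obtain ⟨y, hy, r, hr, hxy⟩ :=
      exists_eq_add_of_mem_hull hGnn (hlift x 1 zero_le_one fun i => by simpa using hx i)
    have hyW : y ∈ convexHull ℝ W :=
      mem_convexHull_of_mem_hull _ hW hy (by simpa using (congrArg Prod.snd hxy).symm)
    refine ⟨y.1, ?_, r, hr, by simpa using (congrArg Prod.fst hxy).symm⟩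
    rw [← LinearMap.image_convexHull]
    exact ⟨y, hyW, rfl⟩
  · rintro _ ⟨v, hv, r, hr, rfl⟩
    refine add_mem_polyhedron (convexHull_min ?_ (convex_polyhedron f β) hv) (hR hr)
    rintro _ ⟨_, ⟨g, ⟨hg, hg2⟩, rfl⟩, rfl⟩ i
    have := ((hK _).1 (smul_mem K (inv_nonneg.2 hg2.le) (hGK g hg))).2 i
    simpa [hg2.ne'] using this
  · obtain ⟨y, hy, r, hr, hxy⟩ :=
      exists_eq_add_of_mem_hull hGnn (hlift x 0 le_rfl fun i => by simpa using hx i)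
    have hy0 : y = 0 := eq_zero_of_mem_hull_of_apply_nonpos (LinearMap.snd ℝ E ℝ)
      (fun w hw => by simp [hW w hw]) hy (by simpa using (congrArg Prod.snd hxy).symm.le)
    rwa [show x = r by simpa [hy0] using congrArg Prod.fst hxy]

theorem exists_isMinOn_polyhedron [Finite ι] [Module.Finite ℝ E] {f : ι → E →ₗ[ℝ] ℝ}
    {β : ι → ℝ} (φ : E →ₗ[ℝ] ℝ) (hne : (polyhedron f β).Nonempty)
    (hφ : ∀ d ∈ polyhedron f 0, 0 ≤ φ d) : ∃ x ∈ polyhedron f β, IsMinOn φ (polyhedron f β) x := by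
  obtain ⟨V, R, hV, -, hS, hR⟩ := exists_polyhedron_eq_convexHull_add_hull f β
  have hVne : V.Nonempty := by
    obtain ⟨_, ⟨v, hv, -⟩⟩ := hS ▸ hne
    exact convexHull_nonempty_iff.1 ⟨v, hv⟩
  obtain ⟨x, hx, hmin⟩ := V.exists_min_image φ hV hVne
  refine ⟨x, hS ▸ ⟨x, subset_convexHull ℝ V hx, 0, zero_mem _, add_zero x⟩, isMinOn_iff.2 ?_⟩
  rw [hS]
  rintro _ ⟨v, hv, d, hd, rfl⟩
  have hxv : φ x ≤ φ v := convexHull_min hmin (convex_halfSpace_ge φ.isLinear _) hv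
  have hd : 0 ≤ φ d := hφ d (hR ▸ hd)
  rw [map_add]
  linarith

theorem polyhedron_sumElim {κ : Type*} (f : ι → E →ₗ[ℝ] ℝ) (f' : κ → E →ₗ[ℝ] ℝ) (β : ι → ℝ)
    (β' : κ → ℝ) :
    polyhedron (Sum.elim f f') (Sum.elim β β') = polyhedron f β ∩ polyhedron f' β' := by
  ext; simp [polyhedron]

end Polyhedron

section VectorOptimization

variable {ι κ E F : Type*} [AddCommGroup E] [Module ℝ E] [AddCommGroup F] [Module ℝ F]

theorem sum_pos_of_mem_polyhedron_zero [Fintype κ] {g : κ → F →ₗ[ℝ] ℝ}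
    (hg : ∀ y, (∀ j, g j y = 0) → y = 0) {c : F} (hc : c ∈ polyhedron g 0) (hc0 : c ≠ 0) :
    0 < ∑ j, g j c := by
  refine (Finset.sum_nonneg fun j _ => hc j).lt_of_ne fun h => hc0 (hg c fun j => ?_)
  exact (Finset.sum_eq_zero_iff_of_nonneg fun j _ => hc j).1 h.symm j (Finset.mem_univ j)

/-- Minimize the weighted sum `∑ j, g j` of the objective over the polyhedron of feasible points
whose image dominates `P x₀`. -/
theorem exists_minimizer_sub_mem [Finite ι] [Fintype κ] [Module.Finite ℝ E]
    {f : ι → E →ₗ[ℝ] ℝ} {β : ι → ℝ} {g : κ → F →ₗ[ℝ] ℝ} (P : E →ₗ[ℝ] F)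
    (hg : ∀ y, (∀ j, g j y = 0) → y = 0)
    (hrec : ∀ d ∈ polyhedron f 0, -P d ∈ polyhedron g 0 → P d = 0)
    {x₀ : E} (hx₀ : x₀ ∈ polyhedron f β) :
    ∃ x ∈ polyhedron f β, P x₀ - P x ∈ polyhedron g 0 ∧
      P x ∉ P '' polyhedron f β + (polyhedron g 0 \ {0}) := by
  set w : F →ₗ[ℝ] ℝ := ∑ j, g j
  set f' : ι ⊕ κ → E →ₗ[ℝ] ℝ := Sum.elim f fun j => -(g j ∘ₗ P)
  have hdom : ∀ γ y, polyhedron f' (Sum.elim γ fun j => -g j y) =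
      polyhedron f γ ∩ {x | y - P x ∈ polyhedron g 0} := fun γ y => by
    rw [polyhedron_sumElim]
    ext x
    simp [polyhedron, sub_nonneg]
  have hrec' : ∀ d ∈ polyhedron f' 0, 0 ≤ (w ∘ₗ P) d := by
    intro d hd
    rw [show (0 : ι ⊕ κ → ℝ) = Sum.elim (0 : ι → ℝ) fun j => -g j 0 by ext (i | j) <;> simp,
      hdom] at hd
    simp [hrec d hd.1 (by simpa using hd.2)]
  have hx₀' : x₀ ∈ polyhedron f' (Sum.elim β fun j => -g j (P x₀)) := by
    rw [hdom]
    exact ⟨hx₀, fun j => by simp⟩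
  obtain ⟨x, hx, hmin⟩ := exists_isMinOn_polyhedron (w ∘ₗ P) ⟨x₀, hx₀'⟩ hrec'
  rw [hdom] at hx hmin
  obtain ⟨hx, hxC⟩ := hx
  refine ⟨x, hx, hxC, ?_⟩
  rintro ⟨_, ⟨z, hz, rfl⟩, c, ⟨hc, hc0⟩, hzc⟩
  have hzC : P x₀ - P z ∈ polyhedron g 0 := by
    simpa [← hzc, sub_add_eq_sub_sub, sub_add_cancel] using add_mem_polyhedron hxC hc
  have hle := isMinOn_iff.1 hmin z ⟨hz, hzC⟩
  have hc' := sum_pos_of_mem_polyhedron_zero hg hc hc0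
  simp only [LinearMap.comp_apply, ← hzc, map_add, w, LinearMap.sum_apply] at hle
  linarith

theorem convexHull_add_hull_add_eq {C : PointedCone ℝ F} {V R V' R' : Set F}
    (hV' : V' ⊆ convexHull ℝ V + hull ℝ R) (hR' : R' ⊆ hull ℝ R)
    (hV : V ⊆ V' + C) (hR : R ⊆ hull ℝ R' + C) :
    convexHull ℝ V' + hull ℝ R' + C = convexHull ℝ V + hull ℝ R + C := by
  apply Subset.antisymm
  · have h₁ : convexHull ℝ V' ⊆ convexHull ℝ V + hull ℝ R :=
      convexHull_min hV' ((convex_convexHull ℝ V).add (hull ℝ R).convex)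
    have h₂ : (hull ℝ R' : Set F) ⊆ hull ℝ R := Submodule.span_le.2 hR'
    calc convexHull ℝ V' + hull ℝ R' + C ⊆ convexHull ℝ V + hull ℝ R + hull ℝ R + C := by
          gcongr
      _ = convexHull ℝ V + hull ℝ R + C := by rw [add_assoc (convexHull ℝ V), coe_add_coe]
  · have h₁ : convexHull ℝ V ⊆ convexHull ℝ V' + C :=
      convexHull_min (hV.trans (add_subset_add_right (subset_convexHull ℝ V')))
        ((convex_convexHull ℝ V').add C.convex)
    have h₂ : (hull ℝ R : Set F) ⊆ hull ℝ R' + C := by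
      rw [← Submodule.coe_sup]
      exact Submodule.span_le.2 (by rwa [Submodule.coe_sup])
    calc convexHull ℝ V + hull ℝ R + C ⊆ convexHull ℝ V' + C + (hull ℝ R' + C) + C := by
          gcongr
      _ = convexHull ℝ V' + hull ℝ R' + (C + C + C : Set F) := by abel
      _ = convexHull ℝ V' + hull ℝ R' + C := by rw [coe_add_coe, coe_add_coe]

theorem image_hull (P : E →ₗ[ℝ] F) (s : Set E) : P '' (hull ℝ s : Set E) = hull ℝ (P '' s) := by
  rw [← coe_map]
  exact congrArg _ (Submodule.map_span _ _)

theorem exists_minimizers_convexHull_add_hull_add_eq [Finite ι] [Fintype κ] [Module.Finite ℝ E]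
    {f : ι → E →ₗ[ℝ] ℝ} {β : ι → ℝ} {g : κ → F →ₗ[ℝ] ℝ} (P : E →ₗ[ℝ] F)
    (hg : ∀ y, (∀ j, g j y = 0) → y = 0)
    (hrec : ∀ d ∈ polyhedron f 0, -P d ∈ polyhedron g 0 → P d = 0)
    (hne : (polyhedron f β).Nonempty) :
    ∃ Spoi Sdir : Set E, Spoi.Finite ∧ Sdir.Finite ∧ Spoi.Nonempty ∧
      Spoi ⊆ polyhedron f β ∧ Sdir ⊆ polyhedron f 0 \ {0} ∧
      (∀ x ∈ Spoi, P x ∉ P '' polyhedron f β + (polyhedron g 0 \ {0})) ∧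
      (∀ x ∈ Sdir, P x ∉ P '' polyhedron f 0 + (polyhedron g 0 \ {0})) ∧
      convexHull ℝ (P '' Spoi) + hull ℝ (P '' Sdir) + polyhedron g 0 =
        P '' polyhedron f β + polyhedron g 0 := by
  obtain ⟨V, R, hV, hR, hS, hRS⟩ := exists_polyhedron_eq_convexHull_add_hull f β
  have hVS : V ⊆ polyhedron f β := fun v hv =>
    hS ▸ ⟨v, subset_convexHull ℝ V hv, 0, zero_mem _, add_zero v⟩
  choose! pt hpt using fun v (hv : v ∈ V) => exists_minimizer_sub_mem P hg hrec (hVS hv)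
  choose! dir hdir using fun ρ (hρ : ρ ∈ R) =>
    exists_minimizer_sub_mem P hg hrec (β := 0) (hRS ▸ subset_hull hρ)
  have hVne : V.Nonempty := by
    obtain ⟨_, ⟨v, hv, -⟩⟩ := hS ▸ hne
    exact convexHull_nonempty_iff.1 ⟨v, hv⟩
  refine ⟨pt '' V, dir '' R \ {0}, hV.image _, (hR.image _).sdiff, hVne.image _,
    ?_, ?_, ?_, ?_, ?_⟩
  · rintro _ ⟨v, hv, rfl⟩
    exact (hpt v hv).1
  · rintro _ ⟨⟨ρ, hρ, rfl⟩, h0⟩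
    exact ⟨(hdir ρ hρ).1, h0⟩
  · rintro _ ⟨v, hv, rfl⟩
    exact (hpt v hv).2.2
  · rintro _ ⟨⟨ρ, hρ, rfl⟩, -⟩
    exact (hdir ρ hρ).2.2
  rw [← coe_dual_range, hS, image_add, LinearMap.image_convexHull, image_hull]
  refine convexHull_add_hull_add_eq ?_ ?_ ?_ ?_
  · rw [← LinearMap.image_convexHull, ← image_hull, ← image_add, ← hS]
    exact image_mono fun x ⟨v, hv, hx⟩ => hx ▸ (hpt v hv).1
  · rw [← image_hull, hRS]
    exact image_mono fun x ⟨⟨ρ, hρ, hx⟩, _⟩ => hx ▸ (hdir ρ hρ).1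
  · rintro _ ⟨v, hv, rfl⟩
    exact ⟨P (pt v), mem_image_of_mem _ (mem_image_of_mem _ hv), P v - P (pt v),
      coe_dual_range g ▸ (hpt v hv).2.1, add_sub_cancel _ _⟩
  · rintro _ ⟨ρ, hρ, rfl⟩
    refine ⟨P (dir ρ), ?_, P ρ - P (dir ρ), coe_dual_range g ▸ (hdir ρ hρ).2.1, add_sub_cancel _ _⟩
    by_cases h0 : dir ρ = 0
    · simp [h0]
    · exact subset_hull (mem_image_of_mem _ ⟨mem_image_of_mem _ hρ, h0⟩)

end VectorOptimization

section VLP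

variable {q : ℕ}

theorem coneOf_eq_hull (B : Set (Fin q → ℝ)) : coneOf B = hull ℝ B := by
  ext x
  rw [SetLike.mem_coe, mem_hull_iff_eq_zero_or_smul_mem_convexHull]
  rfl

def linealitySpace (U : Set (Fin q → ℝ)) : Set (Fin q → ℝ) := recCone U ∩ -recCone U

theorem linealitySpace_inter_eq_zero {Y : Set (Fin q → ℝ)} {C : PointedCone ℝ (Fin q → ℝ)}
    (hC : ∀ d ∈ C, -d ∈ C → d = 0) {y₀ : Fin q → ℝ} (hy₀ : y₀ ∈ Y)
    (hmin : y₀ ∉ Y + ((C : Set (Fin q → ℝ)) \ {0})) :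
    linealitySpace (Y + C : Set (Fin q → ℝ)) ∩ C = {0} := by
  refine Subset.antisymm ?_ (singleton_subset_iff.2 ⟨⟨?_, ?_⟩, zero_mem C⟩)
  · rintro d ⟨⟨-, hd⟩, hdC⟩
    obtain ⟨y, hy, c, hc, hyc⟩ := hd y₀ ⟨y₀, hy₀, 0, zero_mem C, add_zero y₀⟩
    by_contra hd0
    refine hmin ⟨y, hy, c + d, ⟨add_mem hc hdC, fun h => hd0 ?_⟩, ?_⟩
    · exact hC d hdC (eq_neg_of_add_eq_zero_left h ▸ hc)
    · change y + c = y₀ + -d at hyc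
      change y + (c + d) = y₀
      rw [← add_assoc, hyc, neg_add_cancel_right]
  · intro y hy; simpa using hy
  · intro y hy; simpa using hy

theorem map_eq_zero_of_linealitySpace_inter_eq_zero {E : Type*} [AddCommGroup E] [Module ℝ E]
    {S D : Set E} {C : PointedCone ℝ (Fin q → ℝ)} (P : E →ₗ[ℝ] Fin q → ℝ)
    (hSD : ∀ x ∈ S, ∀ d ∈ D, x + d ∈ S)
    (hL : linealitySpace (P '' S + C : Set (Fin q → ℝ)) ∩ C = {0})
    {d : E} (hd : d ∈ D) (hPd : -P d ∈ C) : P d = 0 := by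
  have : -P d ∈ linealitySpace (P '' S + C : Set (Fin q → ℝ)) ∩ C := by
    refine ⟨⟨?_, ?_⟩, hPd⟩
    · rintro _ ⟨y, hy, c, hc, rfl⟩
      exact ⟨y, hy, c + -P d, add_mem hc hPd, (add_assoc _ _ _).symm⟩
    · rintro _ ⟨_, ⟨z, hz, rfl⟩, c, hc, rfl⟩
      refine ⟨P (z + d), mem_image_of_mem _ (hSD z hz d hd), c, hc, ?_⟩
      change P (z + d) + c = P z + c + -(-P d)
      rw [neg_neg, map_add, add_right_comm]
  rw [hL] at this
  exact neg_eq_zero.1 this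

end VLP

theorem vlp_solution_existence_iff
    (m n q r : ℕ) (A : Matrix (Fin m) (Fin n) ℝ) (b : Fin m → ℝ)
    (P : Matrix (Fin q) (Fin n) ℝ) (Z : Matrix (Fin q) (Fin r) ℝ)
    (hker : ∀ y : Fin q → ℝ, Z.transpose.mulVec y = 0 → y = 0)
    (C : Set (Fin q → ℝ)) (hC : C = {y | ∀ j, 0 ≤ Z.transpose.mulVec y j})
    (S : Set (Fin n → ℝ)) (hS : S = {x | ∀ i, b i ≤ A.mulVec x i})
    (UI : Set (Fin q → ℝ)) (hUI : UI = (P.mulVec '' S) + C)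
    (L : Set (Fin q → ℝ)) (hL : L = recCone UI ∩ (-recCone UI)) :
    (∃ Spoi Sdir : Set (Fin n → ℝ), IsVLPSolution A b P C Spoi Sdir) ↔
      (S.Nonempty ∧ L ∩ C = {0}) := by
  subst hC hS hUI hL
  set f : Fin m → (Fin n → ℝ) →ₗ[ℝ] ℝ := fun i => LinearMap.proj i ∘ₗ A.mulVecLin
  set g : Fin r → (Fin q → ℝ) →ₗ[ℝ] ℝ := fun j => LinearMap.proj j ∘ₗ Z.transpose.mulVecLin
  set K : PointedCone ℝ (Fin q → ℝ) := dual .id (range g)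
  have hg : ∀ y, (∀ j, g j y = 0) → y = 0 := fun y hy => hker y (funext hy)
  have hK : ∀ d ∈ K, -d ∈ K → d = 0 := fun d hd hnd =>
    hg d fun j => le_antisymm (by simpa using hnd (mem_range_self j)) (hd (mem_range_self j))
  change (∃ Spoi Sdir, IsVLPSolution A b P (polyhedron g 0) Spoi Sdir) ↔
    (polyhedron f b).Nonempty ∧ linealitySpace (P.mulVecLin '' polyhedron f b + polyhedron g 0) ∩
      polyhedron g 0 = {0}
  rw [← coe_dual_range g]
  constructor
  · rintro ⟨Spoi, Sdir, -, -, ⟨x₀, hx₀⟩, hfeas, -, hmin, -, -⟩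
    exact ⟨⟨x₀, hfeas x₀ hx₀⟩,
      linealitySpace_inter_eq_zero hK (mem_image_of_mem _ (hfeas x₀ hx₀)) (hmin x₀ hx₀)⟩
  · rintro ⟨hne, hL⟩
    have hrec : ∀ d ∈ polyhedron f 0, -P.mulVecLin d ∈ polyhedron g 0 → P.mulVecLin d = 0 :=
      fun d hd hPd => map_eq_zero_of_linealitySpace_inter_eq_zero P.mulVecLin
        (fun x hx d hd => add_mem_polyhedron hx hd) hL hd
        (by rwa [← SetLike.mem_coe, coe_dual_range])
    obtain ⟨Spoi, Sdir, hpf, hdf, hpne, hpS, hdS, hpmin, hdmin, heq⟩ :=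
      exists_minimizers_convexHull_add_hull_add_eq P.mulVecLin hg hrec hne
    rw [← coe_dual_range g] at hpmin hdmin heq
    exact ⟨Spoi, Sdir, hpf, hdf, hpne, hpS, fun x hx => ⟨(hdS hx).2, (hdS hx).1⟩, hpmin, hdmin,
      by rw [coneOf_eq_hull]; exact heq⟩
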